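/- arXiv:2411.08247 — 4 statements merged into one kernel-verified Lean document; each statement's English description precedes it below -/
import Mathlib

section
/- Let k ≥ 2 be an even integer. Then the Nimber of the Toggle position P_{1,0}(3k,k) is 0; that is, the Toggle game on the generalized Petersen graph P(3k,k) in which every inner vertex has weight 1 and every outer vertex has weight 0 is a second-player win. -/
namespace Toggle

variable {V : Type*} [Fintype V] [DecidableEq V]

/-- The closed neighborhood `N[v]` of a vertex as a `Finset`. -/
def closedNbhd (G : SimpleGraph V) [DecidableRel G.Adj] (v : V) : Finset V :=
  insert v (G.neighborFinset v)

/-- The result of a Toggle move at `v`: flip the weight of every vertex in `N[v]`. -/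
def move (G : SimpleGraph V) [DecidableRel G.Adj] (ω : V → Bool) (v : V) : V → Bool :=
  fun u => if u ∈ closedNbhd G v then !(ω u) else ω u

/-- Total weight of a position. -/
def weight (ω : V → Bool) : ℕ := (Finset.univ.filter (fun u => ω u = true)).card

/-- Weight of a position over the closed neighborhood of `v`. -/
def nbhdWeight (G : SimpleGraph V) [DecidableRel G.Adj] (ω : V → Bool) (v : V) : ℕ :=
  ((closedNbhd G v).filter (fun u => ω u = true)).card

/-- A Toggle move at `v` is legal iff `ω v = 1` and the move strictly decreases the
weight over `N[v]`. -/
def IsLegal (G : SimpleGraph V) [DecidableRel G.Adj] (ω : V → Bool) (v : V) : Prop :=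
  ω v = true ∧ nbhdWeight G (move G ω v) v < nbhdWeight G ω v

instance (G : SimpleGraph V) [DecidableRel G.Adj] (ω : V → Bool) (v : V) :
    Decidable (IsLegal G ω v) :=
  inferInstanceAs (Decidable (ω v = true ∧ nbhdWeight G (move G ω v) v < nbhdWeight G ω v))

theorem weight_move_lt (G : SimpleGraph V) [DecidableRel G.Adj] {ω : V → Bool} {v : V}
    (h : IsLegal G ω v) : weight (move G ω v) < weight ω := by
  have key : ∀ ψ : V → Bool,
      weight ψ = ((closedNbhd G v).filter (fun u => ψ u = true)).card
        + ((Finset.univ \ closedNbhd G v).filter (fun u => ψ u = true)).card := by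
    intro ψ
    rw [weight, ← Finset.card_union_of_disjoint
      (Finset.disjoint_filter_filter Finset.disjoint_sdiff)]
    congr 1
    ext u
    simp only [Finset.mem_filter, Finset.mem_union, Finset.mem_sdiff, Finset.mem_univ,
      true_and]
    tauto
  have hout : ((Finset.univ \ closedNbhd G v).filter (fun u => move G ω v u = true))
      = ((Finset.univ \ closedNbhd G v).filter (fun u => ω u = true)) := by
    apply Finset.filter_congr
    intro u hu
    rw [Finset.mem_sdiff] at hu
    simp [move, hu.2]
  have h2 := h.2
  rw [key (move G ω v), key ω, hout]
  unfold nbhdWeight at h2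
  omega

/-- Minimal excludant of a finite set of naturals. -/
noncomputable def mex (s : Finset ℕ) : ℕ := sInf {n : ℕ | n ∉ s}

/-- The Nimber (Grundy value) of a Toggle position. -/
noncomputable def grundy (G : SimpleGraph V) [DecidableRel G.Adj] (ω : V → Bool) : ℕ :=
  mex ((Finset.univ.filter (fun v => IsLegal G ω v)).attach.image
    (fun v => grundy G (move G ω v.1)))
termination_by weight ω
decreasing_by
  have hv := v.2
  rw [Finset.mem_filter] at hv
  exact weight_move_lt G hv.2

/-- One legal Toggle move transforms `ω` into `ω'`. -/
def Step (G : SimpleGraph V) [DecidableRel G.Adj] (ω ω' : V → Bool) : Prop :=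
  ∃ v, IsLegal G ω v ∧ ω' = move G ω v

/-- `ω'` is reachable from `ω` by a (possibly empty) sequence of legal moves. -/
def Reach (G : SimpleGraph V) [DecidableRel G.Adj] (ω ω' : V → Bool) : Prop :=
  Relation.ReflTransGen (Step G) ω ω'

/-- `v` is terminally unplayable at `ω`: unplayable at `ω` and at every position
reachable from `ω`. -/
def TerminallyUnplayable (G : SimpleGraph V) [DecidableRel G.Adj] (ω : V → Bool) (v : V) :
    Prop :=
  ∀ ω', Reach G ω ω' → ¬ IsLegal G ω' v

/-- `v` is penultimately unplayable for the initial position `ω₀`: at every position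
reachable from `ω₀`, after any legal move at a vertex `u ∈ N[v]`, the vertex `v` is
terminally unplayable. -/
def PenultimatelyUnplayableAt (G : SimpleGraph V) [DecidableRel G.Adj] (ω₀ : V → Bool)
    (v : V) : Prop :=
  ∀ ω', Reach G ω₀ ω' → ∀ u ∈ closedNbhd G v, IsLegal G ω' u →
    TerminallyUnplayable G (move G ω' u) v

/-- The position `ω₀` is penultimately unplayable if every vertex is. -/
def PenultimatelyUnplayable (G : SimpleGraph V) [DecidableRel G.Adj] (ω₀ : V → Bool) :
    Prop :=
  ∀ v, PenultimatelyUnplayableAt G ω₀ v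

/-- The path graph on `Fin n`, vertices `0, 1, …, n-1` in order. -/
def pathGraph (n : ℕ) : SimpleGraph (Fin n) :=
  SimpleGraph.fromRel (fun a b => (a : ℕ) + 1 = (b : ℕ))

instance (n : ℕ) : DecidableRel (pathGraph n).Adj := fun a b =>
  decidable_of_iff _ (SimpleGraph.fromRel_adj _ a b).symm

/-- The 2×m grid graph `L_{2,m}` (0-indexed rows and columns). -/
def gridGraph (m : ℕ) : SimpleGraph (Fin 2 × Fin m) :=
  SimpleGraph.fromRel (fun a b =>
    (a.1 = b.1 ∧ (a.2 : ℕ) + 1 = (b.2 : ℕ)) ∨ (a.2 = b.2 ∧ (a.1 : ℕ) + 1 = (b.1 : ℕ)))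

instance (m : ℕ) : DecidableRel (gridGraph m).Adj := fun a b =>
  decidable_of_iff _ (SimpleGraph.fromRel_adj _ a b).symm

/-- The generalized Petersen graph `P(m,k)`; the vertex `(0, i)` is the outer vertex
`u_i` and `(1, i)` is the inner vertex `w_i` (0-indexed). -/
def petersen (m k : ℕ) : SimpleGraph (Fin 2 × Fin m) :=
  SimpleGraph.fromRel (fun a b =>
    (a.1 = 0 ∧ b.1 = 0 ∧ ((a.2 : ℕ) + 1) % m = (b.2 : ℕ)) ∨
    (a.1 = 0 ∧ b.1 = 1 ∧ a.2 = b.2) ∨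
    (a.1 = 1 ∧ b.1 = 1 ∧ ((a.2 : ℕ) + k) % m = (b.2 : ℕ)))

instance (m k : ℕ) : DecidableRel (petersen m k).Adj := fun a b =>
  decidable_of_iff _ (SimpleGraph.fromRel_adj _ a b).symm

/-- The position on `P(m,k)` where every outer vertex has weight 1 and every inner
vertex has weight 0. -/
def P01 (m : ℕ) : Fin 2 × Fin m → Bool := fun p => decide (p.1 = 0)

/-- The position on `P(m,k)` where every inner vertex has weight 1 and every outer
vertex has weight 0. -/
def P10 (m : ℕ) : Fin 2 × Fin m → Bool := fun p => decide (p.1 = 1)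

/-- The position where every vertex has weight 1. -/
def P11 (m : ℕ) : Fin 2 × Fin m → Bool := fun _ => true

/-- The Toggle position `H_m` on `L_{2,m}` (columns 0-indexed): for `m ≠ 3`, weight 0
exactly at `(0,0), (0,m-1), (1,0), (1,1), (1,m-2), (1,m-1)`; for `m = 3`, weight 0
exactly at `(0,0), (0,2), (1,0), (1,2)`. -/
def Hpos (m : ℕ) : Fin 2 × Fin m → Bool := fun p =>
  if m = 3 then !(decide ((p.2 : ℕ) = 0 ∨ (p.2 : ℕ) = 2))
  else !(decide ((p.1 = 0 ∧ ((p.2 : ℕ) = 0 ∨ (p.2 : ℕ) = m - 1)) ∨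
                 (p.1 = 1 ∧ ((p.2 : ℕ) ≤ 1 ∨ m - 2 ≤ (p.2 : ℕ)))))

/-- The Toggle position `D_m` on `L_{2,m}` (columns 0-indexed): weight 0 exactly at
`(0,0), (0,m-2), (0,m-1), (1,0), (1,1), (1,m-1)`. -/
def Dpos (m : ℕ) : Fin 2 × Fin m → Bool := fun p =>
  !(decide ((p.1 = 0 ∧ ((p.2 : ℕ) = 0 ∨ m - 2 ≤ (p.2 : ℕ))) ∨
            (p.1 = 1 ∧ ((p.2 : ℕ) ≤ 1 ∨ (p.2 : ℕ) = m - 1))))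

/-- The Nimber of the position `H_m`. -/
noncomputable def GH (m : ℕ) : ℕ := grundy (gridGraph m) (Hpos m)

/-- The Nimber of the position `D_m`. -/
noncomputable def GD (m : ℕ) : ℕ := grundy (gridGraph m) (Dpos m)

/-- The cycle graph `C_m` on `Fin m`. -/
def cycleGraph (m : ℕ) : SimpleGraph (Fin m) :=
  SimpleGraph.fromRel (fun a b => ((a : ℕ) + 1) % m = (b : ℕ))

open scoped Classical in
/-- The Nimber of a position of Jacob's Ladder on `C_m`: a position is the `Finset` of
not-yet-removed vertices, and a move at a remaining vertex `v` removes all remaining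
vertices at distance at most 2 from `v` in `C_m`. -/
noncomputable def jlGrundy (m : ℕ) (S : Finset (Fin m)) : ℕ :=
  mex (S.attach.image (fun v =>
    jlGrundy m (S.filter (fun u => 2 < (cycleGraph m).dist v.1 u))))
termination_by S.card
decreasing_by
  apply Finset.card_lt_card
  rw [Finset.ssubset_iff_of_subset (Finset.filter_subset _ _)]
  exact ⟨v.1, v.2, by simp [SimpleGraph.dist_self]⟩

set_option linter.unusedSectionVars false

lemma mem_closedNbhd (G : SimpleGraph V) [DecidableRel G.Adj] {u v : V} :
    u ∈ closedNbhd G v ↔ u = v ∨ G.Adj v u := by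
  simp [closedNbhd]

lemma self_mem_closedNbhd (G : SimpleGraph V) [DecidableRel G.Adj] (v : V) :
    v ∈ closedNbhd G v := (mem_closedNbhd G).2 (Or.inl rfl)

section Symm
variable (G : SimpleGraph V) [DecidableRel G.Adj] (σ : V → V)

lemma nbhdWeight_congr {ψ φ : V → Bool} {v : V}
    (h : ∀ u ∈ closedNbhd G v, ψ u = φ u) :
    nbhdWeight G ψ v = nbhdWeight G φ v := by
  unfold nbhdWeight
  congr 1
  apply Finset.filter_congr
  intro x hx
  simp [h x hx]

variable (hinv : ∀ x, σ (σ x) = x)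
variable (hadj : ∀ a b, G.Adj (σ a) (σ b) ↔ G.Adj a b)

include hinv in
lemma sigma_inj : Function.Injective σ := Function.LeftInverse.injective hinv

include hinv hadj in
lemma mem_cn_sigma (u v : V) : σ u ∈ closedNbhd G (σ v) ↔ u ∈ closedNbhd G v := by
  rw [mem_closedNbhd, mem_closedNbhd, hadj, (sigma_inj σ hinv).eq_iff]

include hinv hadj in
lemma nbhdWeight_sigma {ψ φ : V → Bool} {v : V}
    (h : ∀ u ∈ closedNbhd G v, ψ (σ u) = φ u) :
    nbhdWeight G ψ (σ v) = nbhdWeight G φ v := by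
  unfold nbhdWeight
  refine (Finset.card_bij (fun u _ => σ u) ?_ ?_ ?_).symm
  · intro a ha
    rw [Finset.mem_filter] at ha ⊢
    exact ⟨(mem_cn_sigma G σ hinv hadj a v).2 ha.1, by rw [h a ha.1]; exact ha.2⟩
  · intro a _ b _ hab
    exact sigma_inj σ hinv hab
  · intro b hb
    rw [Finset.mem_filter] at hb
    have hb1 : σ b ∈ closedNbhd G v := by
      have := (mem_cn_sigma G σ hinv hadj (σ b) v)
      rw [hinv b] at this
      exact this.1 hb.1
    refine ⟨σ b, Finset.mem_filter.2 ⟨hb1, ?_⟩, hinv b⟩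
    rw [← h (σ b) hb1, hinv b]
    exact hb.2

include hinv hadj in
lemma legal_sigma {ω : V → Bool} {v : V} (hs : ∀ u, ω (σ u) = ω u)
    (hl : IsLegal G ω v) : IsLegal G ω (σ v) := by
  refine ⟨by rw [hs]; exact hl.1, ?_⟩
  have e1 : nbhdWeight G ω (σ v) = nbhdWeight G ω v :=
    nbhdWeight_sigma G σ hinv hadj (fun u _ => hs u)
  have e2 : nbhdWeight G (move G ω (σ v)) (σ v) = nbhdWeight G (move G ω v) v := by
    apply nbhdWeight_sigma G σ hinv hadj
    intro u hu
    simp only [move]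
    rw [if_pos ((mem_cn_sigma G σ hinv hadj u v).2 hu), if_pos hu, hs]
  rw [e1, e2]
  exact hl.2

variable (hdisj : ∀ v, Disjoint (closedNbhd G v) (closedNbhd G (σ v)))

include hinv hadj hdisj in
lemma response {ω : V → Bool} {v : V} (hs : ∀ u, ω (σ u) = ω u) (hl : IsLegal G ω v) :
    IsLegal G (move G ω v) (σ v) ∧
      ∀ u, move G (move G ω v) (σ v) (σ u) = move G (move G ω v) (σ v) u := by
  have hnd : ∀ u ∈ closedNbhd G (σ v), u ∉ closedNbhd G v := fun u hu hu' =>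
    (Finset.disjoint_left.1 (hdisj v)) hu' hu
  have hagree : ∀ u ∈ closedNbhd G (σ v), move G ω v u = ω u := by
    intro u hu
    simp [move, hnd u hu]
  have hlσ := legal_sigma G σ hinv hadj hs hl
  constructor
  · refine ⟨?_, ?_⟩
    · rw [hagree (σ v) (self_mem_closedNbhd G (σ v)), hs]
      exact hl.1
    · have e1 : nbhdWeight G (move G ω v) (σ v) = nbhdWeight G ω (σ v) :=
        nbhdWeight_congr G hagree
      have e2 : nbhdWeight G (move G (move G ω v) (σ v)) (σ v)
          = nbhdWeight G (move G ω (σ v)) (σ v) := by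
        apply nbhdWeight_congr G
        intro u hu
        simp only [move, if_pos hu]
        rw [if_neg (hnd u hu)]
      rw [e1, e2]
      exact hlσ.2
  · intro u
    have m1 : σ u ∈ closedNbhd G (σ v) ↔ u ∈ closedNbhd G v :=
      mem_cn_sigma G σ hinv hadj u v
    have m2 : σ u ∈ closedNbhd G v ↔ u ∈ closedNbhd G (σ v) := by
      conv_lhs => rw [show closedNbhd G v = closedNbhd G (σ (σ v)) by rw [hinv]]
      exact mem_cn_sigma G σ hinv hadj u (σ v)
    simp only [move]
    by_cases h1 : u ∈ closedNbhd G v <;> by_cases h2 : u ∈ closedNbhd G (σ v) <;>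
      simp [m1, m2, h1, h2, hs u]

end Symm
lemma mex_eq_zero {s : Finset ℕ} (h : 0 ∉ s) : mex s = 0 :=
  Nat.sInf_eq_zero.2 (Or.inl h)

lemma mex_ne_zero {s : Finset ℕ} (h : 0 ∈ s) : mex s ≠ 0 := by
  intro h0
  rcases Nat.sInf_eq_zero.1 h0 with h1 | h1
  · exact h1 h
  · have h2 : (s.sup id) + 1 ∈ {n : ℕ | n ∉ s} := by
      intro hm
      have := Finset.le_sup (f := id) hm
      simp only [id] at this
      omega
    rw [h1] at h2
    exact h2

lemma grundy_symm_zero (G : SimpleGraph V) [DecidableRel G.Adj] (σ : V → V)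
    (hinv : ∀ x, σ (σ x) = x)
    (hadj : ∀ a b, G.Adj (σ a) (σ b) ↔ G.Adj a b)
    (hdisj : ∀ v, Disjoint (closedNbhd G v) (closedNbhd G (σ v)))
    (ω : V → Bool) (hs : ∀ u, ω (σ u) = ω u) : grundy G ω = 0 := by
  suffices H : ∀ n (ω : V → Bool), weight ω = n → (∀ u, ω (σ u) = ω u) →
      grundy G ω = 0 from H _ ω rfl hs
  intro n
  induction n using Nat.strong_induction_on with
  | _ n ih =>
    intro ω hw hs
    rw [grundy]
    apply mex_eq_zero
    intro h0
    obtain ⟨v, -, hgv⟩ := Finset.mem_image.1 h0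
    have hlv : IsLegal G ω v.1 := (Finset.mem_filter.1 v.2).2
    obtain ⟨hl2, hsym2⟩ := response G σ hinv hadj hdisj hs hlv
    set ω' := move G ω v.1 with hω'
    set ω'' := move G ω' (σ v.1) with hω''
    have hg2 : grundy G ω'' = 0 := by
      apply ih (weight ω'')
      · have w1 := weight_move_lt G hlv
        have w2 := weight_move_lt G hl2
        rw [← hω'] at w1
        rw [← hω''] at w2
        omega
      · rfl
      · exact hsym2
    have : grundy G ω' ≠ 0 := by
      rw [grundy]
      apply mex_ne_zero
      apply Finset.mem_image.2
      refine ⟨⟨σ v.1, Finset.mem_filter.2 ⟨Finset.mem_univ _, hl2⟩⟩,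
        Finset.mem_attach _ _, hg2⟩
    exact this hgv


end Toggle

open Toggle

/-- for `k ≥ 2` even, the Nimber of `P_{1,0}(3k, k)` is 0. -/
theorem statement9 (k : ℕ) (hk : 2 ≤ k) (hke : Even k) :
    Toggle.grundy (Toggle.petersen (3 * k) k) (Toggle.P10 (3 * k)) = 0 := by
  obtain ⟨h, hh⟩ := hke
  have h1 : 1 ≤ h := by omega
  have hr3 : 3 * h < 3 * k := by omega
  set r : Fin (3 * k) := ⟨3 * h, hr3⟩ with hrdef
  have val_add : ∀ x : Fin (3 * k), ((x + r : Fin (3 * k)) : ℕ) = ((x : ℕ) + 3 * h) % (3 * k) :=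
    fun x => by rw [Fin.val_add]
  have addrr : ∀ x : Fin (3 * k), x + r + r = x := by
    intro x
    apply Fin.ext
    rw [val_add, val_add, Nat.mod_add_mod]
    have e : (x : ℕ) + 3 * h + 3 * h = (x : ℕ) + 3 * k := by omega
    rw [e, Nat.add_mod_right, Nat.mod_eq_of_lt x.isLt]
  have hinv : ∀ p : Fin 2 × Fin (3 * k), ((p.1, p.2 + r + r) : Fin 2 × Fin (3 * k)) = p := by
    intro p
    rw [addrr]
  have hcancel : ∀ x y : Fin (3 * k), x + r = y + r → x = y := by
    intro x y hxy
    have h2 := congrArg (fun z => z + r) hxy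
    simp only [addrr] at h2
    exact h2
  -- modular arithmetic helpers
  have toM : ∀ a b : ℕ, b < 3 * k → a % (3 * k) = b → a ≡ b [MOD 3 * k] := by
    intro a b hb hab
    show a % (3 * k) = b % (3 * k)
    rw [Nat.mod_eq_of_lt hb]
    exact hab
  have keyval : ∀ a b : ℕ, a < 3 * k → b < 3 * k → a ≡ b [MOD 3 * k] → a = b := by
    intro a b ha hb hab
    have hc : a % (3 * k) = b % (3 * k) := hab
    rwa [Nat.mod_eq_of_lt ha, Nat.mod_eq_of_lt hb] at hc
  have boomgen : ∀ A B z a b : ℕ, A ≡ B [MOD 3 * k] → A = z + a → B = z + b →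
      a < 3 * k → b < 3 * k → a ≠ b → False := by
    intro A B z a b hm e1 e2 ha hb hne
    subst e1; subst e2
    exact hne (keyval a b ha hb (Nat.ModEq.add_left_cancel' z hm))
  have boom7 : ∀ A B z : ℕ, A ≡ B [MOD 3 * k] → A = z + (3 * h + 2 * k) → B = z → False := by
    intro A B z hm e1 e2
    have hm' : z + (3 * h + 2 * k) ≡ z + 0 [MOD 3 * k] := by
      rw [← e1, Nat.add_zero, ← e2]; exact hm
    have h2 := Nat.ModEq.add_left_cancel' z hm'
    have e : 3 * h + 2 * k = h + 3 * k := by omega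
    rw [e] at h2
    have h3 : (h + 3 * k) % (3 * k) = 0 % (3 * k) := h2
    rw [Nat.add_mod_right, Nat.mod_eq_of_lt (by omega), Nat.zero_mod] at h3
    omega
  -- the shift lemma
  have shift : ∀ (c : ℕ) (x y : Fin (3 * k)),
      (((x + r : Fin (3 * k)) : ℕ) + c) % (3 * k) = ((y + r : Fin (3 * k)) : ℕ) ↔
      ((x : ℕ) + c) % (3 * k) = (y : ℕ) := by
    intro c x y
    rw [val_add, val_add, Nat.mod_add_mod]
    constructor
    · intro hc
      have hc' : (x : ℕ) + 3 * h + c ≡ (y : ℕ) + 3 * h [MOD 3 * k] := hc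
      have e : (x : ℕ) + 3 * h + c = ((x : ℕ) + c) + 3 * h := by omega
      rw [e] at hc'
      have hc'' := Nat.ModEq.add_right_cancel' (3 * h) hc'
      have : ((x : ℕ) + c) % (3 * k) = (y : ℕ) % (3 * k) := hc''
      rwa [Nat.mod_eq_of_lt y.isLt] at this
    · intro hc
      have hc' : (x : ℕ) + c ≡ (y : ℕ) [MOD 3 * k] := toM _ _ y.isLt hc
      have hc'' := Nat.ModEq.add_right (3 * h) hc'
      have e : (x : ℕ) + c + 3 * h = (x : ℕ) + 3 * h + c := by omega
      rw [e] at hc''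
      exact hc''
  -- adjacency invariance
  have eqiff : ∀ x y : Fin (3 * k), x + r = y + r ↔ x = y :=
    fun x y => ⟨hcancel x y, fun e => by rw [e]⟩
  have hadj : ∀ a b : Fin 2 × Fin (3 * k),
      (petersen (3 * k) k).Adj (a.1, a.2 + r) (b.1, b.2 + r) ↔ (petersen (3 * k) k).Adj a b := by
    intro a b
    simp only [petersen, SimpleGraph.fromRel_adj, ne_eq, Prod.mk.injEq, Prod.ext_iff,
      shift, eqiff]
  -- adjacency elimination
  have adjE : ∀ a b : Fin 2 × Fin (3 * k), (petersen (3 * k) k).Adj a b →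
      (a.1 = b.1 ∧ ((a.1 = 0 ∧ (((a.2 : ℕ) + 1) % (3 * k) = (b.2 : ℕ) ∨
                               ((b.2 : ℕ) + 1) % (3 * k) = (a.2 : ℕ)))
        ∨ (a.1 = 1 ∧ (((a.2 : ℕ) + k) % (3 * k) = (b.2 : ℕ) ∨
                      ((b.2 : ℕ) + k) % (3 * k) = (a.2 : ℕ)))))
      ∨ (a.2 = b.2 ∧ a.1 ≠ b.1) := by
    intro a b hab
    rw [petersen, SimpleGraph.fromRel_adj] at hab
    obtain ⟨hne, hab⟩ := hab
    rcases hab with (⟨x, y, z⟩ | ⟨x, y, z⟩ | ⟨x, y, z⟩) | (⟨x, y, z⟩ | ⟨x, y, z⟩ | ⟨x, y, z⟩)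
    · exact Or.inl ⟨x.trans y.symm, Or.inl ⟨x, Or.inl z⟩⟩
    · exact Or.inr ⟨z, by rw [x, y]; decide⟩
    · exact Or.inl ⟨x.trans y.symm, Or.inr ⟨x, Or.inl z⟩⟩
    · exact Or.inl ⟨y.trans x.symm, Or.inl ⟨y, Or.inr z⟩⟩
    · exact Or.inr ⟨z.symm, by rw [x, y]; decide⟩
    · exact Or.inl ⟨y.trans x.symm, Or.inr ⟨y, Or.inr z⟩⟩
  -- disjointness of N[v] and N[σ v]
  have hdisj : ∀ v : Fin 2 × Fin (3 * k),
      Disjoint (closedNbhd (petersen (3 * k) k) v)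
        (closedNbhd (petersen (3 * k) k) (v.1, v.2 + r)) := by
    intro v
    rw [Finset.disjoint_left]
    intro u hu1 hu2
    rw [mem_closedNbhd] at hu1 hu2
    have hck : ∀ c : ℕ, c = 1 ∨ c = k → c < 3 * k ∧ c + c < 3 * k ∧ 3 * h + c < 3 * k := by
      intro c hc
      rcases hc with rfl | rfl <;> omega
    -- v ≠ σ v on second coordinates
    have hvs : v.2 = v.2 + r → False := by
      intro hv2
      have hval := congrArg Fin.val hv2
      rw [val_add] at hval
      have hmeq : (v.2 : ℕ) + 3 * h ≡ (v.2 : ℕ) [MOD 3 * k] := toM _ _ v.2.isLt hval.symm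
      exact boomgen _ _ (v.2 : ℕ) (3 * h) 0 hmeq (by omega) (by omega) (by omega) (by omega)
        (by omega)
    -- combo killers; c will be 1 or k
    have K1 : ∀ c : ℕ, c = 1 ∨ c = k → ∀ jj : ℕ,
        (v.2 : ℕ) + c ≡ jj [MOD 3 * k] → (v.2 : ℕ) + 3 * h + c ≡ jj [MOD 3 * k] → False := by
      intro c hc jj p q
      obtain ⟨b1, b2, b3⟩ := hck c hc
      exact boomgen _ _ (v.2 : ℕ) c (3 * h + c) (p.trans q.symm) (by omega) (by omega)
        (by omega) (by omega) (by omega)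
    have K2 : ∀ c : ℕ, c = 1 ∨ c = k → ∀ jj : ℕ,
        (v.2 : ℕ) + c ≡ jj [MOD 3 * k] → jj + c ≡ (v.2 : ℕ) + 3 * h [MOD 3 * k] → False := by
      intro c hc jj p q
      obtain ⟨b1, b2, b3⟩ := hck c hc
      have t := (Nat.ModEq.add_right c p).trans q
      refine boomgen _ _ (v.2 : ℕ) (c + c) (3 * h) t (by omega) (by omega) (by omega)
        (by omega) ?_
      rcases hc with rfl | rfl <;> omega
    have K3 : ∀ c : ℕ, c = 1 ∨ c = k → ∀ jj : ℕ,
        jj + c ≡ (v.2 : ℕ) [MOD 3 * k] → (v.2 : ℕ) + 3 * h + c ≡ jj [MOD 3 * k] → False := by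
      intro c hc jj p q
      have t := (Nat.ModEq.add_right c q).trans p
      rcases hc with rfl | rfl
      · exact boomgen _ _ (v.2 : ℕ) (3 * h + 2) 0 t (by omega) (by omega) (by omega)
          (by omega) (by omega)
      · exact boom7 _ _ (v.2 : ℕ) t (by omega) (by omega)
    have K4 : ∀ c : ℕ, c = 1 ∨ c = k → ∀ jj : ℕ,
        jj + c ≡ (v.2 : ℕ) [MOD 3 * k] → jj + c ≡ (v.2 : ℕ) + 3 * h [MOD 3 * k] → False := by
      intro c hc jj p q
      exact boomgen _ _ (v.2 : ℕ) 0 (3 * h) (p.symm.trans q) (by omega) (by omega) (by omega)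
        (by omega) (by omega)
    have K5 : ∀ c : ℕ, c = 1 ∨ c = k →
        (v.2 : ℕ) + c ≡ (v.2 : ℕ) + 3 * h [MOD 3 * k] → False := by
      intro c hc p
      obtain ⟨b1, b2, b3⟩ := hck c hc
      refine boomgen _ _ (v.2 : ℕ) c (3 * h) p (by omega) (by omega) (by omega) (by omega) ?_
      rcases hc with rfl | rfl <;> omega
    have K6 : ∀ c : ℕ, c = 1 ∨ c = k →
        (v.2 : ℕ) + 3 * h + c ≡ (v.2 : ℕ) [MOD 3 * k] → False := by
      intro c hc p
      obtain ⟨b1, b2, b3⟩ := hck c hc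
      exact boomgen _ _ (v.2 : ℕ) (3 * h + c) 0 p (by omega) (by omega) (by omega) (by omega)
        (by omega)
    -- conversion of raw conditions involving v.2 + r
    have convQ1 : ∀ c : ℕ, ∀ w : Fin (3 * k),
        (((v.2 + r : Fin (3 * k)) : ℕ) + c) % (3 * k) = (w : ℕ) →
        (v.2 : ℕ) + 3 * h + c ≡ (w : ℕ) [MOD 3 * k] := by
      intro c w hq
      rw [val_add, Nat.mod_add_mod] at hq
      exact toM _ _ w.isLt hq
    have convQ2 : ∀ c : ℕ, ∀ w : Fin (3 * k),
        ((w : ℕ) + c) % (3 * k) = ((v.2 + r : Fin (3 * k)) : ℕ) →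
        (w : ℕ) + c ≡ (v.2 : ℕ) + 3 * h [MOD 3 * k] := by
      intro c w hq
      rw [val_add] at hq
      exact hq
    have convP : ∀ c : ℕ, ∀ x w : Fin (3 * k),
        ((x : ℕ) + c) % (3 * k) = (w : ℕ) → (x : ℕ) + c ≡ (w : ℕ) [MOD 3 * k] :=
      fun c x w hq => toM _ _ w.isLt hq
    rcases hu1 with e1 | a1
    · rcases hu2 with e2 | a2
      · -- u = v and u = σ v
        have := congrArg Prod.snd (e1.symm.trans e2)
        exact hvs this
      · -- u = v, Adj (σ v) v
        rw [e1] at a2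
        have C2 := adjE (v.1, v.2 + r) v a2
        rcases C2 with ⟨-, ⟨-, q1 | q2⟩ | ⟨-, q1 | q2⟩⟩ | ⟨q3, q4⟩
        · exact K6 1 (Or.inl rfl) (convQ1 1 v.2 q1)
        · exact K5 1 (Or.inl rfl) (convQ2 1 v.2 q2)
        · exact K6 k (Or.inr rfl) (convQ1 k v.2 q1)
        · exact K5 k (Or.inr rfl) (convQ2 k v.2 q2)
        · exact q4 rfl
    · rcases hu2 with e2 | a2
      · -- u = σ v, Adj v (σ v)
        rw [e2] at a1
        have C1 := adjE v (v.1, v.2 + r) a1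
        rcases C1 with ⟨-, ⟨-, p1 | p2⟩ | ⟨-, p1 | p2⟩⟩ | ⟨p3, p4⟩
        · exact K5 1 (Or.inl rfl) (convQ2 1 v.2 p1)
        · exact K6 1 (Or.inl rfl) (convQ1 1 v.2 p2)
        · exact K5 k (Or.inr rfl) (convQ2 k v.2 p1)
        · exact K6 k (Or.inr rfl) (convQ1 k v.2 p2)
        · exact hvs p3
      · -- Adj v u and Adj (σ v) u
        have C1 := adjE v u a1
        have C2 := adjE (v.1, v.2 + r) u a2
        rcases C1 with ⟨x0, ⟨xa, p1 | p2⟩ | ⟨xa, p1 | p2⟩⟩ | ⟨x1, x2⟩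
        · rcases C2 with ⟨-, ⟨-, q1 | q2⟩ | ⟨ya, -⟩⟩ | ⟨-, y2⟩
          · exact K1 1 (Or.inl rfl) _ (convP 1 v.2 u.2 p1) (convQ1 1 u.2 q1)
          · exact K2 1 (Or.inl rfl) _ (convP 1 v.2 u.2 p1) (convQ2 1 u.2 q2)
          · rw [xa] at ya; exact absurd ya (by decide)
          · exact y2 x0
        · rcases C2 with ⟨-, ⟨-, q1 | q2⟩ | ⟨ya, -⟩⟩ | ⟨-, y2⟩
          · exact K3 1 (Or.inl rfl) _ (convP 1 u.2 v.2 p2) (convQ1 1 u.2 q1)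
          · exact K4 1 (Or.inl rfl) _ (convP 1 u.2 v.2 p2) (convQ2 1 u.2 q2)
          · rw [xa] at ya; exact absurd ya (by decide)
          · exact y2 x0
        · rcases C2 with ⟨-, ⟨ya, -⟩ | ⟨-, q1 | q2⟩⟩ | ⟨-, y2⟩
          · rw [xa] at ya; exact absurd ya (by decide)
          · exact K1 k (Or.inr rfl) _ (convP k v.2 u.2 p1) (convQ1 k u.2 q1)
          · exact K2 k (Or.inr rfl) _ (convP k v.2 u.2 p1) (convQ2 k u.2 q2)
          · exact y2 x0
        · rcases C2 with ⟨-, ⟨ya, -⟩ | ⟨-, q1 | q2⟩⟩ | ⟨-, y2⟩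
          · rw [xa] at ya; exact absurd ya (by decide)
          · exact K3 k (Or.inr rfl) _ (convP k u.2 v.2 p2) (convQ1 k u.2 q1)
          · exact K4 k (Or.inr rfl) _ (convP k u.2 v.2 p2) (convQ2 k u.2 q2)
          · exact y2 x0
        · rcases C2 with ⟨y0, -⟩ | ⟨y1, -⟩
          · exact x2 y0
          · exact hvs (x1.trans y1.symm)
  exact grundy_symm_zero (petersen (3 * k) k) (fun p => (p.1, p.2 + r)) hinv hadj hdisj
    (P10 (3 * k)) (fun u => rfl)
end

section
/- For m ≥ 3 and 0 < k ≤ ⌊(m−1)/2⌋, the Nimber of the Toggle position P_{1,1}(m,k) belongs to {0, 1, 2}. -/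
namespace Toggle

variable {V : Type*} [Fintype V] [DecidableEq V]

lemma mem_closedNbhd_equiv (G : SimpleGraph V) [DecidableRel G.Adj] (e : V ≃ V)
    (he : ∀ a b, G.Adj (e a) (e b) ↔ G.Adj a b) (v u : V) :
    e u ∈ closedNbhd G (e v) ↔ u ∈ closedNbhd G v := by
  simp [closedNbhd, SimpleGraph.mem_neighborFinset, he, e.injective.eq_iff]

lemma move_comp (G : SimpleGraph V) [DecidableRel G.Adj] (e : V ≃ V)
    (he : ∀ a b, G.Adj (e a) (e b) ↔ G.Adj a b) (ω : V → Bool) (v : V) :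
    move G (ω ∘ e) v = (move G ω (e v)) ∘ e := by
  funext u
  simp only [move, Function.comp_apply, mem_closedNbhd_equiv G e he]

lemma weight_comp (e : V ≃ V) (ω : V → Bool) : weight (ω ∘ e) = weight ω := by
  unfold weight
  apply Finset.card_bij (fun u _ => e u)
  · intro a ha
    simp only [Finset.mem_filter, Finset.mem_univ, true_and, Function.comp_apply] at ha ⊢
    exact ha
  · intro a _ b _ h
    exact e.injective h
  · intro b hb
    simp only [Finset.mem_filter, Finset.mem_univ, true_and, Function.comp_apply] at hb ⊢
    exact ⟨e.symm b, by simp [hb], by simp⟩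

lemma nbhdWeight_comp (G : SimpleGraph V) [DecidableRel G.Adj] (e : V ≃ V)
    (he : ∀ a b, G.Adj (e a) (e b) ↔ G.Adj a b) (ω : V → Bool) (v : V) :
    nbhdWeight G (ω ∘ e) v = nbhdWeight G ω (e v) := by
  unfold nbhdWeight
  apply Finset.card_bij (fun u _ => e u)
  · intro a ha
    simp only [Finset.mem_filter, Function.comp_apply] at ha ⊢
    exact ⟨(mem_closedNbhd_equiv G e he v a).mpr ha.1, ha.2⟩
  · intro a _ b _ h
    exact e.injective h
  · intro b hb
    simp only [Finset.mem_filter, Function.comp_apply] at hb ⊢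
    refine ⟨e.symm b, ⟨?_, by simp [hb.2]⟩, by simp⟩
    have := (mem_closedNbhd_equiv G e he v (e.symm b))
    rw [e.apply_symm_apply] at this
    exact this.mp hb.1

lemma isLegal_comp (G : SimpleGraph V) [DecidableRel G.Adj] (e : V ≃ V)
    (he : ∀ a b, G.Adj (e a) (e b) ↔ G.Adj a b) (ω : V → Bool) (v : V) :
    IsLegal G (ω ∘ e) v ↔ IsLegal G ω (e v) := by
  unfold IsLegal
  rw [move_comp G e he, nbhdWeight_comp G e he, nbhdWeight_comp G e he]
  rfl

lemma grundy_comp (G : SimpleGraph V) [DecidableRel G.Adj] (e : V ≃ V)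
    (he : ∀ a b, G.Adj (e a) (e b) ↔ G.Adj a b) (ω : V → Bool) :
    grundy G (ω ∘ e) = grundy G ω := by
  suffices h : ∀ n, ∀ ω : V → Bool, weight ω < n → grundy G (ω ∘ e) = grundy G ω from
    h (weight ω + 1) ω (Nat.lt_succ_self _)
  intro n
  induction n with
  | zero => exact fun ω h => absurd h (Nat.not_lt_zero _)
  | succ n ih =>
    intro ω hω
    rw [grundy, grundy]
    congr 1
    ext x
    simp only [Finset.mem_image, Finset.mem_attach, true_and, Subtype.exists,
      Finset.mem_filter, Finset.mem_univ, true_and]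
    constructor
    · rintro ⟨v, hv, rfl⟩
      have hlv : IsLegal G ω (e v) := (isLegal_comp G e he ω v).mp hv
      refine ⟨e v, hlv, ?_⟩
      rw [move_comp G e he]
      exact (ih (move G ω (e v))
        (lt_of_lt_of_le (weight_move_lt G hlv) (Nat.lt_succ_iff.mp hω))).symm
    · rintro ⟨v, hv, rfl⟩
      have hlv : IsLegal G (ω ∘ e) (e.symm v) := by
        rw [isLegal_comp G e he, e.apply_symm_apply]
        exact hv
      refine ⟨e.symm v, hlv, ?_⟩
      rw [move_comp G e he, e.apply_symm_apply]
      exact ih (move G ω v)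
        (lt_of_lt_of_le (weight_move_lt G hv) (Nat.lt_succ_iff.mp hω))

lemma mex_le_card (s : Finset ℕ) : mex s ≤ s.card := by
  by_contra h
  push_neg at h
  have hsub : Finset.range (s.card + 1) ⊆ s := by
    intro n hn
    rw [Finset.mem_range] at hn
    by_contra hns
    have h2 := Nat.sInf_le (show n ∈ {k | k ∉ s} from hns)
    unfold mex at h
    omega
  have h3 := Finset.card_le_card hsub
  rw [Finset.card_range] at h3
  omega

lemma rot_key {m : ℕ} [NeZero m] (x y i : Fin m) (c : ℕ) :
    (((x + i : Fin m) : ℕ) + c) % m = ((y + i : Fin m) : ℕ) ↔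
      ((x : ℕ) + c) % m = (y : ℕ) := by
  rw [Fin.val_add, Fin.val_add, Nat.mod_add_mod]
  have hy : (y : ℕ) % m = y := Nat.mod_eq_of_lt y.isLt
  constructor
  · intro h
    have h' : (x : ℕ) + c + (i : ℕ) ≡ (y : ℕ) + (i : ℕ) [MOD m] := by
      unfold Nat.ModEq
      rw [show (x : ℕ) + c + (i : ℕ) = (x : ℕ) + (i : ℕ) + c by ring, h]
    have h'' := Nat.ModEq.add_right_cancel' (i : ℕ) h'
    unfold Nat.ModEq at h''
    rw [hy] at h''
    exact h''
  · intro h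
    have h' : (x : ℕ) + c ≡ (y : ℕ) [MOD m] := by
      unfold Nat.ModEq
      rw [h, hy]
    have h'' := h'.add_right (i : ℕ)
    unfold Nat.ModEq at h''
    rw [show (x : ℕ) + c + (i : ℕ) = (x : ℕ) + (i : ℕ) + c by ring] at h''
    exact h''

lemma rot_adj {m k : ℕ} [NeZero m] (i : Fin m) (p q : Fin 2 × Fin m) :
    (petersen m k).Adj (p.1, p.2 + i) (q.1, q.2 + i) ↔ (petersen m k).Adj p q := by
  obtain ⟨a, x⟩ := p
  obtain ⟨b, y⟩ := q
  simp only [petersen, SimpleGraph.fromRel_adj, ne_eq, Prod.mk.injEq, not_and]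
  rw [rot_key x y i 1, rot_key y x i 1, rot_key x y i k, rot_key y x i k,
    add_left_inj, add_left_inj]

end Toggle

/-- for `m ≥ 3` and `0 < k ≤ ⌊(m-1)/2⌋`, the Nimber of `P_{1,1}(m,k)`
belongs to `{0, 1, 2}`. -/
theorem statement10 (m k : ℕ) (hm : 3 ≤ m) (hk : 0 < k) (hk' : k ≤ (m - 1) / 2) :
    Toggle.grundy (Toggle.petersen m k) (Toggle.P11 m) ∈ ({0, 1, 2} : Set ℕ) := by
  haveI : NeZero m := ⟨by omega⟩
  set G := Toggle.petersen m k with hG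
  -- every rotation is an automorphism
  have he : ∀ (j : Fin m) (p q : Fin 2 × Fin m),
      G.Adj ((Equiv.refl (Fin 2)).prodCongr (Equiv.addRight j) p)
        ((Equiv.refl (Fin 2)).prodCongr (Equiv.addRight j) q) ↔ G.Adj p q := by
    intro j p q
    simp only [Equiv.prodCongr_apply, Prod.map, Equiv.refl_apply, Equiv.coe_addRight]
    exact Toggle.rot_adj j p q
  -- all moves at vertices with the same first coordinate give the same grundy value
  have hsym : ∀ (a : Fin 2) (j : Fin m),
      Toggle.grundy G (Toggle.move G (Toggle.P11 m) (a, j))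
        = Toggle.grundy G (Toggle.move G (Toggle.P11 m) (a, 0)) := by
    intro a j
    set e : (Fin 2 × Fin m) ≃ (Fin 2 × Fin m) :=
      (Equiv.refl (Fin 2)).prodCongr (Equiv.addRight j) with hedef
    have hP : Toggle.P11 m ∘ e = Toggle.P11 m := rfl
    have hmc := Toggle.move_comp G e (he j) (Toggle.P11 m) (a, 0)
    rw [hP] at hmc
    have hev : e (a, 0) = (a, j) := by
      simp [hedef, Equiv.prodCongr_apply, Prod.map]
    rw [hev] at hmc
    rw [← Toggle.grundy_comp G e (he j) (Toggle.move G (Toggle.P11 m) (a, j)), ← hmc]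
  have h2 : Toggle.grundy G (Toggle.P11 m) ≤ 2 := by
    rw [Toggle.grundy]
    refine le_trans (Toggle.mex_le_card _) ?_
    refine le_trans (Finset.card_le_card (show _ ⊆
      ({Toggle.grundy G (Toggle.move G (Toggle.P11 m) ((0 : Fin 2), (0 : Fin m))),
        Toggle.grundy G (Toggle.move G (Toggle.P11 m) ((1 : Fin 2), (0 : Fin m)))} :
        Finset ℕ) from ?_)) ?_
    · intro x hx
      simp only [Finset.mem_image, Finset.mem_attach, true_and, Subtype.exists,
        Finset.mem_filter, Finset.mem_univ, true_and] at hx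
      obtain ⟨⟨a, j⟩, _, rfl⟩ := hx
      fin_cases a
      · show Toggle.grundy G (Toggle.move G (Toggle.P11 m) (0, j)) ∈ _
        rw [hsym 0 j]
        simp
      · show Toggle.grundy G (Toggle.move G (Toggle.P11 m) (1, j)) ∈ _
        rw [hsym 1 j]
        simp
    · exact le_trans (Finset.card_insert_le _ _) (by simp)
  have h2' : Toggle.grundy (Toggle.petersen m k) (Toggle.P11 m) ≤ 2 := h2
  rw [Set.mem_insert_iff, Set.mem_insert_iff, Set.mem_singleton_iff]
  omega
end

section
/- For every integer k ≥ 3, the Nimber of Jacob's Ladder on the cycle C_{2k} is 0, and the Nimber of the disjoint sum of two copies of Jacob's Ladder on the cycle C_k is 0. -/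
/-!
On `C_{2k}` the second player answers a move at `v` by the move at the antipode `v + k`.
For `k ≥ 3` the antipode is at distance greater than 2 from `v`, so it survives the first
move; and since rotation by `k` is an involutive automorphism of the cycle, the position left
after both moves is again invariant under it. By induction every rotation-invariant position,
in particular the full cycle, has Nimber 0. The second claim is `x ^^^ x = 0`.
-/

namespace SimpleGraph

variable {V W : Type*} {G : SimpleGraph V} {H : SimpleGraph W}

theorem Hom.edist_le (f : G →g H) (u v : V) : H.edist (f u) (f v) ≤ G.edist u v :=
  le_iInf fun p => (p.map f).edist_le.trans_eq (by rw [Walk.length_map])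

theorem Iso.edist_eq (e : G ≃g H) (u v : V) : H.edist (e u) (e v) = G.edist u v := by
  refine le_antisymm (e.toHom.edist_le u v) ?_
  simpa using e.symm.toHom.edist_le (e u) (e v)

theorem Iso.dist_eq (e : G ≃g H) (u v : V) : H.dist (e u) (e v) = G.dist u v :=
  congrArg ENat.toNat (e.edist_eq u v)

end SimpleGraph

namespace Toggle

open SimpleGraph
open scoped Fin.NatCast Fin.CommRing

theorem cycleGraph_eq_circulantGraph (m : ℕ) [NeZero m] :
    cycleGraph m = circulantGraph {1} := by
  have hsucc (a b : Fin m) : ((a : ℕ) + 1) % m = b ↔ b - a = 1 := by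
    rw [sub_eq_iff_eq_add', eq_comm, Fin.ext_iff, Fin.val_add, Fin.val_one', Nat.add_mod_mod]
  ext a b
  simp only [cycleGraph, fromRel_adj, circulantGraph_adj, Set.mem_singleton_iff, hsucc]
  tauto

theorem cycleGraph_connected (m : ℕ) [NeZero m] : (cycleGraph m).Connected := by
  obtain ⟨n, rfl⟩ : ∃ n, m = n + 1 := Nat.exists_eq_succ_of_ne_zero (NeZero.ne m)
  rw [cycleGraph_eq_circulantGraph, ← SimpleGraph.cycleGraph_eq_circulantGraph]
  exact SimpleGraph.cycleGraph_connected

def rotation {m : ℕ} [NeZero m] (c : Fin m) : cycleGraph m ≃g cycleGraph m where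
  toEquiv := Equiv.addRight c
  map_rel_iff' := by
    rw [cycleGraph_eq_circulantGraph]
    exact circulantGraph_adj_translate

theorem rotation_half_involutive (k : ℕ) [NeZero (2 * k)] :
    Function.Involutive (rotation (k : Fin (2 * k))) := fun v => by
  have hkk : (k : Fin (2 * k)) + k = 0 := by
    rw [← Nat.cast_add, ← two_mul, Fin.natCast_self]
  change v + k + k = v
  rw [add_assoc, hkk, add_zero]

theorem natCast_half_ne_of_le_two {k : ℕ} (hk : 3 ≤ k) [NeZero (2 * k)] {i : ℕ} (hi : i ≤ 2) :
    (k : Fin (2 * k)) ≠ i ∧ (k : Fin (2 * k)) + i ≠ 0 := by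
  constructor
  · rw [Ne, Fin.ext_iff, Fin.val_natCast, Fin.val_natCast, Nat.mod_eq_of_lt (by omega),
      Nat.mod_eq_of_lt (by omega)]
    omega
  · rw [← Nat.cast_add, Ne, Fin.natCast_eq_zero]
    exact fun h => absurd (Nat.le_of_dvd (by omega) h) (by omega)

theorem two_lt_dist_add_half {k : ℕ} (hk : 3 ≤ k) [NeZero (2 * k)] (v : Fin (2 * k)) :
    2 < (cycleGraph (2 * k)).dist v (v + k) := by
  obtain ⟨hk0, -⟩ := natCast_half_ne_of_le_two hk (i := 0) (by omega)
  obtain ⟨hk1, hk1'⟩ := natCast_half_ne_of_le_two hk (i := 1) (by omega)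
  obtain ⟨hk2, hk2'⟩ := natCast_half_ne_of_le_two hk (i := 2) (by omega)
  simp only [Nat.cast_zero, Nat.cast_one, Nat.cast_ofNat] at hk0 hk1 hk1' hk2 hk2'
  suffices 2 < (cycleGraph (2 * k)).edist v (v + k) by
    rwa [← ((cycleGraph_connected _).preconnected v (v + k)).coe_dist_eq_edist,
      ← Nat.cast_ofNat, Nat.cast_lt] at this
  -- `v` and `v + k` are distinct, non-adjacent and without common neighbour as `k ∉ {0, ±1, ±2}`.
  rw [two_lt_edist_iff, cycleGraph_eq_circulantGraph]
  refine ⟨fun h => hk0 (by linear_combination -h), fun h => ?_, ?_⟩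
  · rw [circulantGraph_adj] at h
    rcases h.2 with h | h <;> simp only [Set.mem_singleton_iff] at h
    · exact hk1' (by linear_combination -h)
    · exact hk1 (by linear_combination h)
  · refine Set.eq_empty_of_forall_notMem fun w hw => ?_
    rw [mem_commonNeighbors, circulantGraph_adj, circulantGraph_adj] at hw
    obtain ⟨⟨-, h1 | h1⟩, ⟨-, h2 | h2⟩⟩ := hw <;>
      simp only [Set.mem_singleton_iff] at h1 h2
    · exact hk0 (by linear_combination h2 - h1)
    · exact hk2' (by linear_combination -h1 - h2)
    · exact hk2 (by linear_combination h1 + h2)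
    · exact hk0 (by linear_combination h1 - h2)

theorem mex_eq_zero_iff {s : Finset ℕ} : mex s = 0 ↔ 0 ∉ s := by
  rw [mex, Nat.sInf_eq_zero, Set.mem_ofPred_eq, or_iff_left]
  obtain ⟨n, hn⟩ := Infinite.exists_notMem_finset s
  exact Set.nonempty_iff_ne_empty.1 ⟨n, hn⟩

noncomputable def jlMove (m : ℕ) (v : Fin m) (S : Finset (Fin m)) : Finset (Fin m) :=
  S.filter fun u => 2 < (cycleGraph m).dist v u

theorem mem_jlMove {m : ℕ} {v u : Fin m} {S : Finset (Fin m)} :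
    u ∈ jlMove m v S ↔ u ∈ S ∧ 2 < (cycleGraph m).dist v u :=
  Finset.mem_filter

theorem jlMove_ssubset {m : ℕ} {v : Fin m} {S : Finset (Fin m)} (hv : v ∈ S) :
    jlMove m v S ⊂ S :=
  Finset.ssubset_iff_of_subset (Finset.filter_subset _ _) |>.2
    ⟨v, hv, by simp⟩

theorem jlGrundy_eq_zero_iff {m : ℕ} {S : Finset (Fin m)} :
    jlGrundy m S = 0 ↔ ∀ v ∈ S, jlGrundy m (jlMove m v S) ≠ 0 := by
  rw [jlGrundy, mex_eq_zero_iff]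
  simp [jlMove]

theorem jlGrundy_eq_zero_of_invariant {m : ℕ} (σ : cycleGraph m ≃g cycleGraph m)
    (hσ : Function.Involutive σ) (hfar : ∀ v, 2 < (cycleGraph m).dist v (σ v))
    (S : Finset (Fin m)) (hS : ∀ x, σ x ∈ S ↔ x ∈ S) : jlGrundy m S = 0 := by
  induction S using Finset.strongInduction with
  | H S ih =>
  refine jlGrundy_eq_zero_iff.2 fun v hv => ?_
  have hσv : σ v ∈ jlMove m v S := mem_jlMove.2 ⟨(hS v).2 hv, hfar v⟩
  have hdist (x : Fin m) : (cycleGraph m).dist v (σ x) = (cycleGraph m).dist (σ v) x := by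
    rw [← Iso.dist_eq σ, hσ]
  have hreply : jlGrundy m (jlMove m (σ v) (jlMove m v S)) = 0 := by
    refine ih _ ((jlMove_ssubset hσv).trans (jlMove_ssubset hv)) fun x => ?_
    simp only [mem_jlMove, Iso.dist_eq σ, hdist, hS]
    tauto
  rw [Ne, jlGrundy_eq_zero_iff, not_forall₂]
  exact ⟨σ v, hσv, not_not.2 hreply⟩

end Toggle

/-- for `k ≥ 3`, the Nimber of Jacob's Ladder on `C_{2k}` is 0, and the
Nimber of the disjoint sum of two copies of Jacob's Ladder on `C_k` (the nim-sum,
i.e. bitwise XOR, of their Nimbers) is 0. -/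
theorem statement12 (k : ℕ) (hk : 3 ≤ k) :
    Toggle.jlGrundy (2 * k) Finset.univ = 0 ∧
    (Toggle.jlGrundy k Finset.univ ^^^ Toggle.jlGrundy k Finset.univ) = 0 := by
  have : NeZero (2 * k) := ⟨by omega⟩
  refine ⟨?_, Nat.xor_self _⟩
  exact Toggle.jlGrundy_eq_zero_of_invariant _ (Toggle.rotation_half_involutive k)
    (Toggle.two_lt_dist_add_half hk) _ (by simp)
end

section
/- In a game of Toggle starting from the position P_{0,1}(m,1) or from the position P_{1,0}(m,1) on the generalized Petersen graph P(m,1) (m ≥ 3), every vertex v that is unplayable at some reachable position is terminally unplayable at that position. -/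
namespace Toggle

open Finset

variable {V : Type*} [Fintype V] [DecidableEq V] (G : SimpleGraph V) [DecidableRel G.Adj]

lemma nbhdWeight_move_self (ω : V → Bool) (v : V) :
    nbhdWeight G (move G ω v) v = (closedNbhd G v).card - nbhdWeight G ω v := by
  have hflip : (closedNbhd G v).filter (fun u => move G ω v u = true)
      = closedNbhd G v \ (closedNbhd G v).filter (fun u => ω u = true) := by
    ext u
    by_cases hu : u ∈ closedNbhd G v <;> simp [move, hu]
  rw [nbhdWeight, hflip, card_sdiff_of_subset (filter_subset _ _), nbhdWeight]

lemma isLegal_iff (ω : V → Bool) (v : V) :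
    IsLegal G ω v ↔ ω v = true ∧ (closedNbhd G v).card < 2 * nbhdWeight G ω v := by
  have hle : nbhdWeight G ω v ≤ (closedNbhd G v).card := card_filter_le _ _
  rw [IsLegal, nbhdWeight_move_self]
  exact and_congr_right fun _ => by omega

lemma Reach.mem_of_step_mem {S : Set (V → Bool)}
    (hS : ∀ ω ω', ω ∈ S → Step G ω ω' → ω' ∈ S) {ω ω' : V → Bool}
    (h : Reach G ω ω') (hω : ω ∈ S) : ω' ∈ S := by
  induction h with
  | refl => exact hω
  | tail _ hstep ih => exact hS _ _ ih hstep

theorem terminallyUnplayable_of_isLegal_antitone {S : Set (V → Bool)}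
    (hS : ∀ ω ω', ω ∈ S → Step G ω ω' → ω' ∈ S)
    (hanti : ∀ ω ω' v, ω ∈ S → Step G ω ω' → IsLegal G ω' v → IsLegal G ω v)
    {ω : V → Bool} (hω : ω ∈ S) {v : V} (hv : ¬ IsLegal G ω v) :
    TerminallyUnplayable G ω v := by
  intro ω' h
  suffices ω' ∈ S ∧ ¬ IsLegal G ω' v from this.2
  induction h with
  | refl => exact ⟨hω, hv⟩
  | tail _ hstep ih => exact ⟨hS _ _ ih.1 hstep, fun h => ih.2 (hanti _ _ _ ih.1 hstep h)⟩

end Toggle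

namespace Toggle.Prism

open Finset Fin.CommRing

variable {m : ℕ} [NeZero m]

lemma fin_two_add_one_ne (r : Fin 2) : r + 1 ≠ r := by revert r; decide

lemma fin_two_add_one_add_one (r : Fin 2) : r + 1 + 1 = r := by revert r; decide

lemma fin_two_eq_or_eq_add_one (s r : Fin 2) : s = r ∨ s = r + 1 := by revert s r; decide

lemma add_one_ne_self (hm : 2 ≤ m) (b : Fin m) : b + 1 ≠ b := by
  have : Nontrivial (Fin m) := Fin.nontrivial_iff_two_le.mpr hm
  simp

lemma sub_one_ne_self (hm : 2 ≤ m) (b : Fin m) : b - 1 ≠ b := by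
  have : Nontrivial (Fin m) := Fin.nontrivial_iff_two_le.mpr hm
  simp

lemma add_one_ne_sub_one (hm : 3 ≤ m) (b : Fin m) : b + 1 ≠ b - 1 := by
  have h2 : (2 : Fin m) ≠ 0 := by
    rw [Ne, ← Nat.cast_ofNat, CharP.cast_eq_zero_iff (Fin m) m]
    exact Nat.not_dvd_of_pos_of_lt two_pos (by omega)
  intro h
  exact h2 (by linear_combination h)

lemma petersen_one_adj (hm : 2 ≤ m) (s t : Fin 2) (i j : Fin m) :
    (petersen m 1).Adj (s, i) (t, j) ↔
      (s = t ∧ (j = i + 1 ∨ i = j + 1)) ∨ (s ≠ t ∧ i = j) := by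
  have hsucc : ∀ a b : Fin m, ((a : ℕ) + 1) % m = b ↔ b = a + 1 := fun a b => by
    rw [Fin.ext_iff, Fin.val_add, Fin.val_one', Nat.mod_eq_of_lt (show 1 < m by omega), eq_comm]
  rw [petersen, SimpleGraph.fromRel_adj]
  simp only [hsucc, ne_eq, Prod.mk.injEq, not_and]
  fin_cases s <;> fin_cases t <;> simp
  all_goals first
    | exact eq_comm
    | rintro (h | h) rfl <;> exact add_one_ne_self hm _ h.symm

lemma closedNbhd_petersen_one (hm : 2 ≤ m) (r : Fin 2) (b : Fin m) :
    closedNbhd (petersen m 1) (r, b) = {(r, b), (r, b + 1), (r, b - 1), (r + 1, b)} := by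
  ext ⟨s, j⟩
  have hpred : b = j + 1 ↔ j = b - 1 := by rw [eq_sub_iff_add_eq, eq_comm]
  rw [closedNbhd, mem_insert, SimpleGraph.mem_neighborFinset, petersen_one_adj hm]
  rcases fin_two_eq_or_eq_add_one s r with rfl | rfl
  · simp [hpred, eq_comm (a := b), (fin_two_add_one_ne s).symm]
  · simp [fin_two_add_one_ne r, eq_comm (a := b)]

lemma mem_closedNbhd_petersen_one (hm : 2 ≤ m) (r : Fin 2) (b j : Fin m) :
    (r, j) ∈ closedNbhd (petersen m 1) (r, b) ↔ j = b ∨ j = b + 1 ∨ j = b - 1 := by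
  simp [closedNbhd_petersen_one hm, (fin_two_add_one_ne r).symm]

lemma mem_closedNbhd_petersen_one_add_one (hm : 2 ≤ m) (r : Fin 2) (b j : Fin m) :
    (r + 1, j) ∈ closedNbhd (petersen m 1) (r, b) ↔ j = b := by
  simp [closedNbhd_petersen_one hm, fin_two_add_one_ne r]

lemma sum_closedNbhd_petersen_one (hm : 3 ≤ m) (f : Fin 2 × Fin m → ℕ) (r : Fin 2)
    (b : Fin m) :
    ∑ u ∈ closedNbhd (petersen m 1) (r, b), f u
      = f (r, b) + f (r, b + 1) + f (r, b - 1) + f (r + 1, b) := by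
  have h1 := add_one_ne_self (by omega) b
  have h2 := sub_one_ne_self (by omega) b
  have h3 := add_one_ne_sub_one hm b
  have h4 := fin_two_add_one_ne r
  rw [closedNbhd_petersen_one (by omega), sum_insert (by simp [h1.symm, h2.symm, h4.symm]),
    sum_insert (by simp [h3, h4.symm]), sum_insert (by simp [h4.symm]), sum_singleton]
  ring

lemma isLegal_petersen_one_iff (hm : 3 ≤ m) (ω : Fin 2 × Fin m → Bool) (r : Fin 2)
    (b : Fin m) :
    IsLegal (petersen m 1) ω (r, b) ↔ ω (r, b) = true ∧
      2 < (if ω (r, b) = true then 1 else 0) + (if ω (r, b + 1) = true then 1 else 0)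
        + (if ω (r, b - 1) = true then 1 else 0) + (if ω (r + 1, b) = true then 1 else 0) := by
  have hcard : (closedNbhd (petersen m 1) (r, b)).card = 4 := by
    rw [card_eq_sum_ones, sum_closedNbhd_petersen_one hm]
  rw [isLegal_iff, hcard, nbhdWeight, card_filter, sum_closedNbhd_petersen_one hm]
  exact and_congr_right fun _ => by omega

def ball (T : Finset (Fin m)) : Finset (Fin m) :=
  univ.filter fun j => j - 1 ∈ T ∨ j ∈ T ∨ j + 1 ∈ T

/-- The position reached by playing the vertices `(r, b)`, `b ∈ T`, from the position with
weight 1 exactly on row `r`. -/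
def pos (r : Fin 2) (T : Finset (Fin m)) : Fin 2 × Fin m → Bool :=
  fun p => if p.1 = r then decide (p.2 ∉ ball T) else decide (p.2 ∈ T)

def NoConsecutive (T : Finset (Fin m)) : Prop := ∀ a ∈ T, a + 1 ∉ T

def IsFar (T : Finset (Fin m)) (b : Fin m) : Prop :=
  b - 1 ∉ ball T ∧ b ∉ ball T ∧ b + 1 ∉ ball T

lemma mem_ball {T : Finset (Fin m)} {j : Fin m} :
    j ∈ ball T ↔ j - 1 ∈ T ∨ j ∈ T ∨ j + 1 ∈ T := by
  simp [ball]

lemma mem_ball_of_mem {T : Finset (Fin m)} {j : Fin m} (h : j ∈ T) : j ∈ ball T :=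
  mem_ball.mpr (Or.inr (Or.inl h))

lemma ball_mono {S T : Finset (Fin m)} (h : S ⊆ T) : ball S ⊆ ball T := fun j => by
  simp only [mem_ball]
  exact Or.imp (@h _) (Or.imp (@h _) (@h _))

lemma mem_ball_insert {T : Finset (Fin m)} {b j : Fin m} :
    j ∈ ball (insert b T) ↔ (j = b ∨ j = b + 1 ∨ j = b - 1) ∨ j ∈ ball T := by
  simp only [mem_ball, mem_insert, sub_eq_iff_eq_add, ← eq_sub_iff_add_eq]
  tauto

lemma pos_self (r : Fin 2) (T : Finset (Fin m)) (j : Fin m) :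
    pos r T (r, j) = decide (j ∉ ball T) := if_pos rfl

lemma pos_add_one (r : Fin 2) (T : Finset (Fin m)) (j : Fin m) :
    pos r T (r + 1, j) = decide (j ∈ T) := if_neg (fin_two_add_one_ne r)

lemma pos_empty (r : Fin 2) : pos r (∅ : Finset (Fin m)) = fun p => decide (p.1 = r) := by
  funext p
  by_cases h : p.1 = r <;> simp [pos, ball, h]

lemma isLegal_pos (hm : 3 ≤ m) {r : Fin 2} {T : Finset (Fin m)} (hT : NoConsecutive T)
    (s : Fin 2) (i : Fin m) :
    IsLegal (petersen m 1) (pos r T) (s, i) ↔ s = r ∧ IsFar T i := by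
  rw [isLegal_petersen_one_iff hm]
  rcases fin_two_eq_or_eq_add_one s r with rfl | rfl
  · simp only [pos_self, pos_add_one, decide_eq_true_eq, true_and, IsFar]
    by_cases h0 : i ∈ ball T
    · simp [h0]
    · have hi : i ∉ T := fun h => h0 (mem_ball_of_mem h)
      by_cases h1 : i + 1 ∈ ball T <;> by_cases h2 : i - 1 ∈ ball T <;> simp [h0, h1, h2, hi]
  · simp only [pos_add_one, fin_two_add_one_add_one, pos_self, decide_eq_true_eq,
      fin_two_add_one_ne, false_and, iff_false, not_and]
    intro hi
    have hsucc : i + 1 ∉ T := hT i hi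
    have hpred : i - 1 ∉ T := fun h => hT _ h (by simpa using hi)
    simp [hi, hsucc, hpred, mem_ball_of_mem hi]

lemma IsFar.notMem {T : Finset (Fin m)} {b : Fin m} (hb : IsFar T b) : b ∉ T :=
  fun h => hb.2.1 (mem_ball_of_mem h)

lemma IsFar.of_insert {T : Finset (Fin m)} {b x : Fin m} (h : IsFar (insert b T) x) :
    IsFar T x := by
  have hsub := ball_mono (subset_insert b T)
  exact ⟨fun h' => h.1 (hsub h'), fun h' => h.2.1 (hsub h'), fun h' => h.2.2 (hsub h')⟩

lemma NoConsecutive.insert (hm : 2 ≤ m) {T : Finset (Fin m)} (hT : NoConsecutive T)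
    {b : Fin m} (hb : IsFar T b) : NoConsecutive (insert b T) := by
  have hsucc : ∀ a ∈ T, a + 1 ≠ b := fun a ha h =>
    hb.1 (mem_ball_of_mem (by rwa [← h, add_sub_cancel_right]))
  intro a ha
  simp only [mem_insert, not_or]
  rcases mem_insert.mp ha with rfl | ha
  · exact ⟨add_one_ne_self hm a, fun h => hb.2.2 (mem_ball_of_mem h)⟩
  · exact ⟨hsucc a ha, hT a ha⟩

lemma move_pos (hm : 3 ≤ m) (r : Fin 2) {T : Finset (Fin m)} {b : Fin m} (hb : IsFar T b) :
    move (petersen m 1) (pos r T) (r, b) = pos r (insert b T) := by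
  have hm2 : 2 ≤ m := by omega
  funext ⟨s, j⟩
  rcases fin_two_eq_or_eq_add_one s r with rfl | rfl
  · simp only [move, mem_closedNbhd_petersen_one hm2, pos_self, mem_ball_insert]
    by_cases hj : j = b ∨ j = b + 1 ∨ j = b - 1
    · have hjT : j ∉ ball T := by
        rcases hj with rfl | rfl | rfl <;> simp [hb.1, hb.2.1, hb.2.2]
      simp [hj, hjT]
    · simp [hj]
  · simp only [move, mem_closedNbhd_petersen_one_add_one hm2, pos_add_one, mem_insert]
    by_cases hj : j = b
    · simp [hj, hb.notMem]
    · simp [hj]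

variable (m) in
def canonical : Set (Fin 2 × Fin m → Bool) := {ω | ∃ r T, NoConsecutive T ∧ ω = pos r T}

lemma exists_of_step_pos (hm : 3 ≤ m) {r : Fin 2} {T : Finset (Fin m)} (hT : NoConsecutive T)
    {ω : Fin 2 × Fin m → Bool} (h : Step (petersen m 1) (pos r T) ω) :
    ∃ b, IsFar T b ∧ ω = pos r (insert b T) := by
  obtain ⟨⟨s, b⟩, hlegal, rfl⟩ := h
  obtain ⟨rfl, hb⟩ := (isLegal_pos hm hT s b).mp hlegal
  exact ⟨b, hb, move_pos hm s hb⟩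

lemma step_mem_canonical (hm : 3 ≤ m) (ω ω' : Fin 2 × Fin m → Bool)
    (hω : ω ∈ canonical m) (h : Step (petersen m 1) ω ω') : ω' ∈ canonical m := by
  obtain ⟨r, T, hT, rfl⟩ := hω
  obtain ⟨b, hb, rfl⟩ := exists_of_step_pos hm hT h
  exact ⟨r, insert b T, hT.insert (by omega) hb, rfl⟩

lemma isLegal_of_step (hm : 3 ≤ m) (ω ω' : Fin 2 × Fin m → Bool) (v : Fin 2 × Fin m)
    (hω : ω ∈ canonical m) (h : Step (petersen m 1) ω ω')
    (hv : IsLegal (petersen m 1) ω' v) : IsLegal (petersen m 1) ω v := by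
  obtain ⟨r, T, hT, rfl⟩ := hω
  obtain ⟨b, hb, rfl⟩ := exists_of_step_pos hm hT h
  obtain ⟨s, i⟩ := v
  obtain ⟨hs, hi⟩ := (isLegal_pos hm (hT.insert (by omega) hb) s i).mp hv
  exact (isLegal_pos hm hT s i).mpr ⟨hs, hi.of_insert⟩

lemma pos_empty_mem_canonical (r : Fin 2) : (fun p => decide (p.1 = r)) ∈ canonical m :=
  ⟨r, ∅, fun a ha => absurd ha (notMem_empty a), (pos_empty r).symm⟩

lemma reach_mem_canonical (hm : 3 ≤ m) {ω ω' : Fin 2 × Fin m → Bool}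
    (h : Reach (petersen m 1) ω ω') (hω : ω ∈ canonical m) : ω' ∈ canonical m :=
  h.mem_of_step_mem _ (step_mem_canonical hm) hω

theorem terminallyUnplayable_of_mem_canonical (hm : 3 ≤ m) {ω : Fin 2 × Fin m → Bool}
    (hω : ω ∈ canonical m) {v : Fin 2 × Fin m} (hv : ¬ IsLegal (petersen m 1) ω v) :
    TerminallyUnplayable (petersen m 1) ω v :=
  terminallyUnplayable_of_isLegal_antitone _ (step_mem_canonical hm) (isLegal_of_step hm) hω hv

end Toggle.Prism

/-- in a game of Toggle on `P(m,1)` (`m ≥ 3`) starting from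
`P_{0,1}(m,1)` or from `P_{1,0}(m,1)`, every vertex that is unplayable at some
reachable position is terminally unplayable at that position. -/
theorem statement13 (m : ℕ) (hm : 3 ≤ m) (ω₀ : Fin 2 × Fin m → Bool)
    (h0 : ω₀ = Toggle.P01 m ∨ ω₀ = Toggle.P10 m)
    (ω : Fin 2 × Fin m → Bool) (hr : Toggle.Reach (Toggle.petersen m 1) ω₀ ω)
    (v : Fin 2 × Fin m) (hv : ¬ Toggle.IsLegal (Toggle.petersen m 1) ω v) :
    Toggle.TerminallyUnplayable (Toggle.petersen m 1) ω v := by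
  have : NeZero m := ⟨by omega⟩
  have h₀ : ω₀ ∈ Toggle.Prism.canonical m := by
    rcases h0 with rfl | rfl <;> exact Toggle.Prism.pos_empty_mem_canonical _
  exact Toggle.Prism.terminallyUnplayable_of_mem_canonical hm
    (Toggle.Prism.reach_mem_canonical hm hr h₀) hv
end
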